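/- Without a degree bound, the node global sensitivity of a mixing-matrix entry is n - 1: for graphs on n ≥ 2 vertices with arbitrary degrees and a labeling with at least two classes, there exist node-neighboring graphs G, G' (on n-1 and n vertices respectively) such that |M_{ij}(G) - M_{ij}(G')| = n - 1, and no node-neighboring pair with the larger graph on n vertices can differ by more than n - 1 in any mixing-matrix entry. -/
import Mathlib


open MeasureTheory

structure FinGraph where
  verts : Finset ℕ
  edges : Finset (Sym2 ℕ)
  not_isDiag : ∀ e ∈ edges, ¬ e.IsDiag
  mem_verts : ∀ e ∈ edges, ∀ v ∈ e, v ∈ verts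

namespace FinGraph

def degree (G : FinGraph) (v : ℕ) : ℕ := (G.edges.filter (fun e => v ∈ e)).card

def maxDegLE (G : FinGraph) (Δ : ℕ) : Prop := ∀ v, G.degree v ≤ Δ

def NodeNeighborStep (G G' : FinGraph) : Prop :=
  ∃ u, u ∉ G.verts ∧ G'.verts = insert u G.verts ∧
    G.edges ⊆ G'.edges ∧ ∀ e ∈ G'.edges, e ∉ G.edges → u ∈ e

def NodeNeighbor (G G' : FinGraph) : Prop :=
  NodeNeighborStep G G' ∨ NodeNeighborStep G' G

def EdgeNeighborStep (G G' : FinGraph) : Prop :=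
  ∃ e, e ∉ G.edges ∧ G'.verts = G.verts ∧ G'.edges = insert e G.edges

def EdgeNeighbor (G G' : FinGraph) : Prop := EdgeNeighborStep G G' ∨ EdgeNeighborStep G' G

def mixEntry {k : ℕ} (G : FinGraph) (L : ℕ → Fin k) (i j : Fin k) : ℕ :=
  (G.edges.filter (fun e => Sym2.map L e = s(i, j))).card

def totalNodematch {k : ℕ} (G : FinGraph) (L : ℕ → Fin k) : ℕ :=
  (G.edges.filter (fun e => (Sym2.map L e).IsDiag)).card

def nodefactor {k : ℕ} (G : FinGraph) (L : ℕ → Fin k) (i : Fin k) : ℕ :=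
  (G.edges.filter (fun e => i ∈ Sym2.map L e)).card

def countDegGE (G : FinGraph) (d : ℕ) : ℕ :=
  (G.verts.filter (fun v => d ≤ G.degree v)).card

end FinGraph

noncomputable def laplace (b : ℝ) : Measure ℝ :=
  MeasureTheory.volume.withDensity (fun z => ENNReal.ofReal ((1 / (2 * b)) * Real.exp (-|z| / b)))

def NodeDP {Ω : Type*} [MeasurableSpace Ω] (A : FinGraph → Measure Ω) (ε : ℝ) : Prop :=
  ∀ G G', FinGraph.NodeNeighbor G G' → ∀ S : Set Ω, MeasurableSet S →
    A G S ≤ ENNReal.ofReal (Real.exp ε) * A G' S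

/-- Without a degree bound, the node global sensitivity of a mixing-matrix entry is
n - 1: the value n - 1 is attained by some node-neighboring pair whose larger graph has
n vertices, and no such pair differs by more than n - 1 in any mixing-matrix entry. -/
theorem mix_entry_unbounded_sensitivity {k : ℕ} (n : ℕ) (hn : 2 ≤ n)
    (i j : Fin k) (hij : i ≠ j) :
    (∃ (L : ℕ → Fin k) (G G' : FinGraph), FinGraph.NodeNeighborStep G G' ∧
      G'.verts.card = n ∧
      ((G'.mixEntry L i j : ℤ) - (G.mixEntry L i j : ℤ)).natAbs = n - 1) ∧
    (∀ (L : ℕ → Fin k) (i' j' : Fin k) (G G' : FinGraph),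
      FinGraph.NodeNeighborStep G G' → G'.verts.card = n →
      ((G'.mixEntry L i' j' : ℤ) - (G.mixEntry L i' j' : ℤ)).natAbs ≤ n - 1) := by

  constructor
  · -- existence
    refine ⟨fun v => if v = n - 1 then i else j,
      ⟨Finset.range (n-1), ∅, by simp, by simp⟩,
      ⟨Finset.range n, (Finset.range (n-1)).image (fun w => s(n-1, w)), ?_, ?_⟩, ?_, ?_, ?_⟩
    · intro e he
      simp only [Finset.mem_image, Finset.mem_range] at he
      obtain ⟨w, hw, rfl⟩ := he
      simp only [Sym2.isDiag_iff_proj_eq]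
      omega
    · intro e he v hv
      simp only [Finset.mem_image, Finset.mem_range] at he
      obtain ⟨w, hw, rfl⟩ := he
      rw [Sym2.mem_iff] at hv
      simp only [Finset.mem_range]
      omega
    · refine ⟨n - 1, by simp, ?_, by simp, ?_⟩
      · show Finset.range n = insert (n - 1) (Finset.range (n - 1))
        ext x
        simp only [Finset.mem_range, Finset.mem_insert]
        omega
      · intro e he _
        simp only [Finset.mem_image, Finset.mem_range] at he
        obtain ⟨w, hw, rfl⟩ := he
        exact Sym2.mem_mk_left _ _
    · simp
    · have h1 : FinGraph.mixEntry (k := k)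
          ⟨Finset.range n, (Finset.range (n-1)).image (fun w => s(n-1, w)), by
            intro e he
            simp only [Finset.mem_image, Finset.mem_range] at he
            obtain ⟨w, hw, rfl⟩ := he
            simp only [Sym2.isDiag_iff_proj_eq]
            omega, by
            intro e he v hv
            simp only [Finset.mem_image, Finset.mem_range] at he
            obtain ⟨w, hw, rfl⟩ := he
            rw [Sym2.mem_iff] at hv
            simp only [Finset.mem_range]
            omega⟩
          (fun v => if v = n - 1 then i else j) i j = n - 1 := by
        unfold FinGraph.mixEntry
        have hinj : Set.InjOn (fun w => s(n-1, w)) (Finset.range (n-1)) := by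
          intro a ha b hb hab
          simp only [Finset.coe_range, Set.mem_Iio] at ha hb
          rw [Sym2.eq_iff] at hab
          omega
        rw [Finset.filter_true_of_mem, Finset.card_image_of_injOn hinj,
          Finset.card_range]
        intro e he
        simp only [Finset.mem_image, Finset.mem_range] at he
        obtain ⟨w, hw, rfl⟩ := he
        have hwne : w ≠ n - 1 := by omega
        simp [Sym2.map_pair_eq, hwne]
      rw [h1]
      have h0 : FinGraph.mixEntry (k := k) ⟨Finset.range (n-1), ∅, by simp, by simp⟩
          (fun v => if v = n - 1 then i else j) i j = 0 := by
        simp [FinGraph.mixEntry]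
      rw [h0]
      simp
  · -- upper bound
    intro L i' j' G G' hstep hcard
    obtain ⟨u, hu, hverts, hsub, hnew⟩ := hstep
    have hfsub : G.edges.filter (fun e => Sym2.map L e = s(i', j')) ⊆
        G'.edges.filter (fun e => Sym2.map L e = s(i', j')) := by
      intro e he
      rw [Finset.mem_filter] at he ⊢
      exact ⟨hsub he.1, he.2⟩
    have hle : G.mixEntry L i' j' ≤ G'.mixEntry L i' j' :=
      Finset.card_le_card hfsub
    have hdiff : G'.mixEntry L i' j' - G.mixEntry L i' j' ≤ n - 1 := by
      have h1 : G'.mixEntry L i' j' - G.mixEntry L i' j' =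
          (G'.edges.filter (fun e => Sym2.map L e = s(i', j')) \
           G.edges.filter (fun e => Sym2.map L e = s(i', j'))).card := by
        simp only [FinGraph.mixEntry]
        rw [Finset.card_sdiff_of_subset hfsub]
      rw [h1]
      have hsub2 : (G'.edges.filter (fun e => Sym2.map L e = s(i', j')) \
           G.edges.filter (fun e => Sym2.map L e = s(i', j'))) ⊆
          (G'.verts.erase u).image (fun w => s(u, w)) := by
        intro e he
        rw [Finset.mem_sdiff, Finset.mem_filter, Finset.mem_filter] at he
        have heG' : e ∈ G'.edges := he.1.1
        have heG : e ∉ G.edges := by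
          intro h
          exact he.2 ⟨h, he.1.2⟩
        have hue : u ∈ e := hnew e heG' heG
        obtain ⟨w, rfl⟩ := Sym2.mem_iff_exists.mp hue
        have hwv : w ∈ G'.verts := G'.mem_verts _ heG' w (Sym2.mem_mk_right u w)
        have hwu : w ≠ u := by
          intro h
          exact G'.not_isDiag _ heG' (by simp [h])
        exact Finset.mem_image.mpr ⟨w, Finset.mem_erase.mpr ⟨hwu, hwv⟩, rfl⟩
      calc _ ≤ ((G'.verts.erase u).image (fun w => s(u, w))).card :=
            Finset.card_le_card hsub2
        _ ≤ (G'.verts.erase u).card := Finset.card_image_le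
        _ ≤ n - 1 := by
            rw [Finset.card_erase_of_mem (by rw [hverts]; exact Finset.mem_insert_self u _),
              hcard]
    omega
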